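/- arXiv:2509.22219 — 2 statements merged into one kernel-verified Lean document; each statement's English description precedes it below -/
import Mathlib

section
/- Let n = 2M, A ∈ SO(n), λ ∈ ℝᴹ, and B = Aᵀ(⊕ᵢ λᵢ J)A. Let x, x' ∈ ℝⁿ with (Ax)₁ ≠ 0 and (Ax')₁ ≠ 0, let t₀ be valid for x and t₀' be valid for x'. If invRep(x; t₀) = invRep(x'; t₀'), then x' = exp((t₀' − t₀)B)·x; in particular x and x' lie on the same orbit {exp(tB)x : t ∈ ℝ} of the one-parameter subgroup generated by B. -/
/-! Conjugating by `A` turns `B` into `⊕ᵢ λᵢ J`, and `J` is the image of `i` under the regular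
representation of `ℂ` on `ℝ²`, so `exp (t • B) = Aᵀ (⊕ᵢ R(tλᵢ)) A`. On the other hand `invRep`
undoes the rotation of each block of `Ax` by the angle `t₀λᵢ`; for the first block, validity of
`t₀` says that `‖v₁‖ e₁` is exactly `R(−t₀λ₁) v₁`. Hence equal representatives force every block
of `Ax'` to be the block of `Ax` rotated by `(t₀' − t₀)λᵢ`, i.e. `Ax' = A exp((t₀' − t₀)B) x`. -/

open Matrix NormedSpace

noncomputable section

/-- `R(t)`: the 2×2 rotation matrix. -/
def R2 (t : ℝ) : Matrix (Fin 2) (Fin 2) ℝ :=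
  !![Real.cos t, -Real.sin t; Real.sin t, Real.cos t]

/-- `J`: the 2×2 matrix with rows (0, -1) and (1, 0). -/
def Jmat : Matrix (Fin 2) (Fin 2) ℝ := !![0, -1; 1, 0]

/-- Index type for `ℝⁿ` with `n = 2M`: component `2(i-1)+p` of block `i` is indexed `(p, i)`. -/
abbrev Idx (M : ℕ) := Fin 2 × Fin M

/-- `SO(n)` for `n = 2M`, on the block index type. -/
def SOb (M : ℕ) : Set (Matrix (Idx M) (Idx M) ℝ) :=
  {A | Aᵀ * A = 1 ∧ A.det = 1}

/-- The block-diagonal matrix `⊕ᵢ Cᵢ`. -/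
def bdiag {M : ℕ} (C : Fin M → Matrix (Fin 2) (Fin 2) ℝ) : Matrix (Idx M) (Idx M) ℝ :=
  Matrix.blockDiagonal C

/-- The `i`-th 2-dimensional block `vᵢ` of a vector `v ∈ ℝⁿ`. -/
def blk {M : ℕ} (v : Idx M → ℝ) (i : Fin M) : Fin 2 → ℝ := fun p => v (p, i)

/-- Concatenation `u₁ ⊕ ⋯ ⊕ u_M` of 2-dimensional blocks. -/
def cat {M : ℕ} (u : Fin M → (Fin 2 → ℝ)) : Idx M → ℝ := fun pi => u pi.2 pi.1

/-- `e₁ = (1, 0) ∈ ℝ²`. -/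
def e1 : Fin 2 → ℝ := ![1, 0]

/-- The Euclidean norm `‖u‖₂` of `u ∈ ℝ²`. -/
def norm2 (u : Fin 2 → ℝ) : ℝ := Real.sqrt (u 0 ^ 2 + u 1 ^ 2)

/-- `t₀` is valid for `x` (w.r.t. `A`, `λ`): `R(t₀λ₁)e₁ = v₁/‖v₁‖₂` where `v = Ax`. -/
def valid {M : ℕ} [NeZero M] (A : Matrix (Idx M) (Idx M) ℝ) (lam : Fin M → ℝ)
    (x : Idx M → ℝ) (t₀ : ℝ) : Prop :=
  (R2 (t₀ * lam 0)).mulVec e1 = (norm2 (blk (A.mulVec x) 0))⁻¹ • blk (A.mulVec x) 0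

/-- `invRep(x; t₀) = ‖v₁‖₂ e₁ ⊕ R(−t₀λ₂)v₂ ⊕ ⋯ ⊕ R(−t₀λ_M)v_M`, where `v = Ax`. -/
def invRep {M : ℕ} [NeZero M] (A : Matrix (Idx M) (Idx M) ℝ) (lam : Fin M → ℝ)
    (x : Idx M → ℝ) (t₀ : ℝ) : Idx M → ℝ :=
  cat (fun i =>
    if i = 0 then norm2 (blk (A.mulVec x) 0) • e1
    else (R2 (-(t₀ * lam i))).mulVec (blk (A.mulVec x) i))

lemma R2_add (a b : ℝ) : R2 (a + b) = R2 a * R2 b := by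
  ext i j
  fin_cases i <;> fin_cases j <;>
    simp [R2, Matrix.mul_apply, Fin.sum_univ_two, Real.cos_add, Real.sin_add] <;> ring

lemma R2_zero : R2 0 = 1 := by
  ext i j
  fin_cases i <;> fin_cases j <;> simp [R2]

lemma eq_R2_sub_mulVec_of_R2_mulVec_eq {a b : ℝ} {u w : Fin 2 → ℝ}
    (h : R2 a *ᵥ u = R2 b *ᵥ w) : w = R2 (a - b) *ᵥ u := by
  calc w = R2 (-b + b) *ᵥ w := by rw [neg_add_cancel, R2_zero, one_mulVec]
    _ = R2 (-b) *ᵥ (R2 a *ᵥ u) := by rw [R2_add, ← mulVec_mulVec, h]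
    _ = R2 (a - b) *ᵥ u := by rw [mulVec_mulVec, ← R2_add, neg_add_eq_sub]

lemma leftMulMatrix_ofReal_mul_I (t : ℝ) :
    Algebra.leftMulMatrix Complex.basisOneI ((t : ℂ) * Complex.I) = t • Jmat := by
  rw [Algebra.leftMulMatrix_complex]
  ext i j
  fin_cases i <;> fin_cases j <;> simp [Jmat]

lemma exp_smul_Jmat (t : ℝ) : exp (t • Jmat) = R2 t := by
  -- `map_exp` wants a normed ring; any matrix norm will do, `exp` only sees the topology.
  let _ : NormedRing (Matrix (Fin 2) (Fin 2) ℝ) := Matrix.linftyOpNormedRing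
  let _ : NormedAlgebra ℝ (Matrix (Fin 2) (Fin 2) ℝ) := Matrix.linftyOpNormedAlgebra
  have hcont : Continuous (Algebra.leftMulMatrix Complex.basisOneI) :=
    (Algebra.leftMulMatrix Complex.basisOneI).toLinearMap.continuous_of_finiteDimensional
  rw [← leftMulMatrix_ofReal_mul_I]
  refine (map_exp _ hcont _).symm.trans ?_
  rw [← Complex.exp_eq_exp_ℂ, Complex.exp_mul_I, Algebra.leftMulMatrix_complex]
  ext i j
  fin_cases i <;> fin_cases j <;> simp [R2, Complex.cos_ofReal_re, Complex.sin_ofReal_re]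

lemma exp_transpose_mul_mul {m : Type*} [Fintype m] [DecidableEq m] {A : Matrix m m ℝ}
    (hA : Aᵀ * A = 1) (D : Matrix m m ℝ) : exp (Aᵀ * D * A) = Aᵀ * exp D * A := by
  have hunit : IsUnit A := (isUnit_iff_isUnit_det A).2 (isUnit_det_of_left_inverse hA)
  rw [← inv_eq_left_inv hA, exp_conj' A D hunit]

section Blocks

variable {M : ℕ}

lemma ext_blk {v w : Idx M → ℝ} (h : ∀ i, blk v i = blk w i) : v = w :=
  funext fun pi => congrFun (h pi.2) pi.1

lemma blk_bdiag_mulVec (C : Fin M → Matrix (Fin 2) (Fin 2) ℝ) (v : Idx M → ℝ) (i : Fin M) :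
    blk (bdiag C *ᵥ v) i = C i *ᵥ blk v i := by
  funext p
  simp [blk, bdiag, mulVec, dotProduct, Fintype.sum_prod_type, blockDiagonal_apply, ite_mul]

lemma smul_bdiag (t : ℝ) (C : Fin M → Matrix (Fin 2) (Fin 2) ℝ) :
    t • bdiag C = bdiag fun i => t • C i :=
  (blockDiagonal_smul t C).symm

lemma exp_bdiag (C : Fin M → Matrix (Fin 2) (Fin 2) ℝ) :
    exp (bdiag C) = bdiag fun i => exp (C i) := by
  let _ : NormedRing (Matrix (Fin 2) (Fin 2) ℝ) := Matrix.linftyOpNormedRing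
  let _ : NormedAlgebra ℝ (Matrix (Fin 2) (Fin 2) ℝ) := Matrix.linftyOpNormedAlgebra
  let _ : NormedAlgebra ℚ (Matrix (Fin 2) (Fin 2) ℝ) := NormedAlgebra.restrictScalars ℚ ℝ _
  rw [bdiag, exp_blockDiagonal]
  exact congrArg blockDiagonal (Pi.exp_def C)

lemma exp_smul_conj_bdiag_Jmat {A : Matrix (Idx M) (Idx M) ℝ} (hA : Aᵀ * A = 1)
    (lam : Fin M → ℝ) (t : ℝ) :
    exp (t • (Aᵀ * bdiag (fun i => lam i • Jmat) * A)) =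
      Aᵀ * bdiag (fun i => R2 (t * lam i)) * A := by
  rw [← smul_mul_assoc, ← mul_smul_comm, smul_bdiag, exp_transpose_mul_mul hA, exp_bdiag]
  simp_rw [smul_smul, exp_smul_Jmat]

end Blocks

lemma norm2_eq_zero_iff {u : Fin 2 → ℝ} : norm2 u = 0 ↔ u = 0 := by
  rw [norm2, Real.sqrt_eq_zero (by positivity),
    add_eq_zero_iff_of_nonneg (sq_nonneg _) (sq_nonneg _)]
  simp [funext_iff, Fin.forall_fin_two]

section Representative

variable {M : ℕ} [NeZero M] {A : Matrix (Idx M) (Idx M) ℝ} {lam : Fin M → ℝ}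
  {x x' : Idx M → ℝ} {t₀ t₀' : ℝ}

lemma blk_invRep (i : Fin M) :
    blk (invRep A lam x t₀) i =
      if i = 0 then norm2 (blk (A *ᵥ x) 0) • e1 else R2 (-(t₀ * lam i)) *ᵥ blk (A *ᵥ x) i :=
  rfl

lemma blk_mulVec_zero_eq_of_valid (h : valid A lam x t₀) :
    blk (A *ᵥ x) 0 = norm2 (blk (A *ᵥ x) 0) • R2 (t₀ * lam 0) *ᵥ e1 := by
  rw [h, smul_smul]
  obtain h0 | h0 := eq_or_ne (norm2 (blk (A *ᵥ x) 0)) 0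
  · simp [norm2_eq_zero_iff.1 h0]
  · rw [mul_inv_cancel₀ h0, one_smul]

lemma blk_mulVec_eq_of_invRep_eq (ht₀ : valid A lam x t₀) (ht₀' : valid A lam x' t₀')
    (heq : invRep A lam x t₀ = invRep A lam x' t₀') (i : Fin M) :
    blk (A *ᵥ x') i = R2 ((t₀' - t₀) * lam i) *ᵥ blk (A *ᵥ x) i := by
  have hblk := congrArg (blk · i) heq
  simp only [blk_invRep] at hblk
  split_ifs at hblk with hi
  · subst hi
    have hnorm : norm2 (blk (A *ᵥ x) 0) = norm2 (blk (A *ᵥ x') 0) := by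
      simpa [e1] using congrFun hblk 0
    calc blk (A *ᵥ x') 0 = norm2 (blk (A *ᵥ x') 0) • R2 (t₀' * lam 0) *ᵥ e1 :=
          blk_mulVec_zero_eq_of_valid ht₀'
      _ = norm2 (blk (A *ᵥ x) 0) • R2 ((t₀' - t₀) * lam 0 + t₀ * lam 0) *ᵥ e1 := by
          rw [hnorm]; ring_nf
      _ = R2 ((t₀' - t₀) * lam 0) *ᵥ (norm2 (blk (A *ᵥ x) 0) • R2 (t₀ * lam 0) *ᵥ e1) := by
          rw [R2_add, mulVec_smul, mulVec_mulVec]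
      _ = R2 ((t₀' - t₀) * lam 0) *ᵥ blk (A *ᵥ x) 0 := by
          rw [← blk_mulVec_zero_eq_of_valid ht₀]
  · rw [eq_R2_sub_mulVec_of_R2_mulVec_eq hblk]
    ring_nf

end Representative

theorem stmt6_general (M : ℕ) [NeZero M] (A : Matrix (Idx M) (Idx M) ℝ) (hA : A ∈ SOb M)
    (lam : Fin M → ℝ) (B : Matrix (Idx M) (Idx M) ℝ)
    (hB : B = Aᵀ * bdiag (fun i => lam i • Jmat) * A)
    (x x' : Idx M → ℝ)
    (t₀ t₀' : ℝ) (ht₀ : valid A lam x t₀) (ht₀' : valid A lam x' t₀')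
    (heq : invRep A lam x t₀ = invRep A lam x' t₀') :
    x' = (exp ((t₀' - t₀) • B)).mulVec x ∧
      x' ∈ {y | ∃ t : ℝ, y = (exp (t • B)).mulVec x} := by
  have hAx' : A *ᵥ x' = bdiag (fun i => R2 ((t₀' - t₀) * lam i)) *ᵥ (A *ᵥ x) :=
    ext_blk fun i => by rw [blk_bdiag_mulVec, blk_mulVec_eq_of_invRep_eq ht₀ ht₀' heq i]
  have hx' : x' = exp ((t₀' - t₀) • B) *ᵥ x := by
    rw [hB, exp_smul_conj_bdiag_Jmat hA.1, ← mulVec_mulVec, ← mulVec_mulVec, ← hAx',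
      mulVec_mulVec, hA.1, one_mulVec]
  exact ⟨hx', t₀' - t₀, hx'⟩

/-- If `invRep(x; t₀) = invRep(x'; t₀')` then `x' = exp((t₀' − t₀)B)x`;
in particular `x` and `x'` lie on the same orbit of the one-parameter subgroup generated
by `B`. -/
theorem stmt6 (M : ℕ) [NeZero M] (A : Matrix (Idx M) (Idx M) ℝ) (hA : A ∈ SOb M)
    (lam : Fin M → ℝ) (B : Matrix (Idx M) (Idx M) ℝ)
    (hB : B = Aᵀ * bdiag (fun i => lam i • Jmat) * A)
    (x x' : Idx M → ℝ)
    (hv : blk (A.mulVec x) 0 ≠ 0) (hv' : blk (A.mulVec x') 0 ≠ 0)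
    (t₀ t₀' : ℝ) (ht₀ : valid A lam x t₀) (ht₀' : valid A lam x' t₀')
    (heq : invRep A lam x t₀ = invRep A lam x' t₀') :
    x' = (exp ((t₀' - t₀) • B)).mulVec x ∧
      x' ∈ {y | ∃ t : ℝ, y = (exp (t • B)).mulVec x} :=
  stmt6_general M A hA lam B hB x x' t₀ t₀' ht₀ ht₀' heq
end
end

section
/- Let n = 2M, let A be an invertible real n×n matrix, λ ∈ ℝᴹ with λ₁ ≠ 0, and L = A⁻¹(⊕ᵢ λᵢ K)A. Let x ∈ ℝⁿ, v = Ax with blocks v₁, …, v_M, assume |v_{1,2}| < |v_{1,1}|, and set t₀ = artanh(v_{1,2}/v_{1,1})/λ₁. Then exp(−t₀L)·x = A⁻¹(sgn(v_{1,1})·√(v_{1,1}² − v_{1,2}²)·e₁ ⊕ H(−t₀λ₂)v₂ ⊕ ⋯ ⊕ H(−t₀λ_M)v_M); in particular A⁻¹·invRep_h(x) lies on the orbit {exp(tL)x : t ∈ ℝ} of x. -/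
open Matrix NormedSpace

noncomputable section

/-- `H(t)`: the 2×2 hyperbolic rotation with rows (cosh t, sinh t), (sinh t, cosh t). -/
def Hyp (t : ℝ) : Matrix (Fin 2) (Fin 2) ℝ :=
  !![Real.cosh t, Real.sinh t; Real.sinh t, Real.cosh t]

/-- `G(t)`: the 2×2 shear with rows (1, t), (0, 1). -/
def Gm (t : ℝ) : Matrix (Fin 2) (Fin 2) ℝ := !![1, t; 0, 1]

/-- `K`: rows (0, 1), (1, 0). -/
def Kmat : Matrix (Fin 2) (Fin 2) ℝ := !![0, 1; 1, 0]

/-- `N`: rows (0, 1), (0, 0). -/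
def Nmat : Matrix (Fin 2) (Fin 2) ℝ := !![0, 1; 0, 0]

/-- `e₂ = (0, 1) ∈ ℝ²`. -/
def e2 : Fin 2 → ℝ := ![0, 1]

/-- The inverse hyperbolic tangent. -/
def artanh (x : ℝ) : ℝ := Real.log ((1 + x) / (1 - x)) / 2

/-- `t₀` is valid for `x` (elliptic case): `R(t₀λ₁)e₁ = v₁/‖v₁‖₂` where `v = Ax`. -/
def validE {M : ℕ} [NeZero M] (A : Matrix (Idx M) (Idx M) ℝ) (lam : Fin M → ℝ)
    (x : Idx M → ℝ) (t₀ : ℝ) : Prop :=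
  (R2 (t₀ * lam 0)).mulVec e1 = (norm2 (blk (A.mulVec x) 0))⁻¹ • blk (A.mulVec x) 0

/-- `invRep_e(x; t₀) = ‖v₁‖₂ e₁ ⊕ R(−t₀λ₂)v₂ ⊕ ⋯ ⊕ R(−t₀λ_M)v_M`, where `v = Ax`. -/
def invRepE {M : ℕ} [NeZero M] (A : Matrix (Idx M) (Idx M) ℝ) (lam : Fin M → ℝ)
    (x : Idx M → ℝ) (t₀ : ℝ) : Idx M → ℝ :=
  cat (fun i =>
    if i = 0 then norm2 (blk (A.mulVec x) 0) • e1
    else (R2 (-(t₀ * lam i))).mulVec (blk (A.mulVec x) i))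

/-- The hyperbolic parameter `t₀ = artanh(v_{1,2}/v_{1,1})/λ₁`, where `v = Ax`. -/
def t0H {M : ℕ} [NeZero M] (A : Matrix (Idx M) (Idx M) ℝ) (lam : Fin M → ℝ)
    (x : Idx M → ℝ) : ℝ :=
  artanh (blk (A.mulVec x) 0 1 / blk (A.mulVec x) 0 0) / lam 0

/-- `invRep_h(x) = sgn(v_{1,1})√(v_{1,1}² − v_{1,2}²) e₁ ⊕ H(−t₀λ₂)v₂ ⊕ ⋯`, `v = Ax`. -/
def invRepH {M : ℕ} [NeZero M] (A : Matrix (Idx M) (Idx M) ℝ) (lam : Fin M → ℝ)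
    (x : Idx M → ℝ) : Idx M → ℝ :=
  cat (fun i =>
    if i = 0 then
      (Real.sign (blk (A.mulVec x) 0 0) *
        Real.sqrt (blk (A.mulVec x) 0 0 ^ 2 - blk (A.mulVec x) 0 1 ^ 2)) • e1
    else (Hyp (-(t0H A lam x * lam i))).mulVec (blk (A.mulVec x) i))

/-- The parabolic parameter `t₀ = v_{1,1}/(λ₁ v_{1,2})`, where `v = Ax`. -/
def t0P {M : ℕ} [NeZero M] (A : Matrix (Idx M) (Idx M) ℝ) (lam : Fin M → ℝ)
    (x : Idx M → ℝ) : ℝ :=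
  blk (A.mulVec x) 0 0 / (lam 0 * blk (A.mulVec x) 0 1)

/-- `invRep_p(x) = v_{1,2} e₂ ⊕ G(−t₀λ₂)v₂ ⊕ ⋯ ⊕ G(−t₀λ_M)v_M`, where `v = Ax`. -/
def invRepP {M : ℕ} [NeZero M] (A : Matrix (Idx M) (Idx M) ℝ) (lam : Fin M → ℝ)
    (x : Idx M → ℝ) : Idx M → ℝ :=
  cat (fun i =>
    if i = 0 then blk (A.mulVec x) 0 1 • e2
    else (Gm (-(t0P A lam x * lam i))).mulVec (blk (A.mulVec x) i))

/-! In the coordinates `v = A x` the flow `exp (s L)` acts block by block through the hyperbolic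
rotations `H(s λᵢ)`, since `exp (s K) = H(s)` (diagonalise `K`). At `s = -t₀` the first block
`v₁ = (a, r a)`, `r = v_{1,2}/v_{1,1}`, is sent to `H(-artanh r) v₁ = a √(1 - r²) e₁`, because
`cosh (artanh r) = 1/√(1 - r²)` and `sinh (artanh r) = r/√(1 - r²)`; finally
`a √(1 - r²) = sgn(a) √(a² - (r a)²)`. -/

lemma artanh_eq_real_artanh {r : ℝ} (hr : r ∈ Set.Icc (-1) 1) : artanh r = Real.artanh r := by
  rw [artanh, Real.artanh_eq_half_log hr]
  ring

lemma Kmat_eq_conj :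
    Kmat = !![(1 : ℝ), 1; 1, -1] * diagonal ![1, -1] * !![(1 : ℝ), 1; 1, -1]⁻¹ := by
  rw [inv_def, adjugate_fin_two, det_fin_two_of]
  ext i j; fin_cases i <;> fin_cases j <;> norm_num [Kmat, diagonal_vec2, mul_fin_two]

lemma exp_smul_Kmat (s : ℝ) : exp (s • Kmat) = Hyp s := by
  have hP : IsUnit !![(1 : ℝ), 1; 1, -1] := by
    rw [isUnit_iff_isUnit_det, det_fin_two_of]; norm_num
  have hexp : exp (s • ![1, -1]) = ![Real.exp s, Real.exp (-s)] := by
    ext i; fin_cases i <;> simp [← Real.exp_eq_exp_ℝ]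
  rw [Kmat_eq_conj, ← smul_mul_assoc, ← mul_smul_comm, ← diagonal_smul, exp_conj _ _ hP,
    exp_diagonal, hexp, inv_def, adjugate_fin_two, det_fin_two_of, diagonal_vec2]
  ext i j; fin_cases i <;> fin_cases j <;>
    norm_num [Hyp, mul_fin_two, Real.cosh_eq, Real.sinh_eq] <;> ring

lemma Hyp_neg_artanh_mulVec {r : ℝ} (hr : |r| < 1) (a : ℝ) :
    (Hyp (-artanh r)).mulVec ![a, r * a] = (a * √(1 - r ^ 2)) • e1 := by
  have hr' : r ∈ Set.Ioo (-1) 1 := abs_lt.mp hr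
  have hs : √(1 - r ^ 2) ^ 2 = 1 - r ^ 2 := Real.sq_sqrt (by nlinarith [abs_lt.mp hr])
  have hs0 : √(1 - r ^ 2) ≠ 0 := by
    rw [Real.sqrt_ne_zero']; nlinarith [abs_lt.mp hr]
  rw [artanh_eq_real_artanh (Set.Ioo_subset_Icc_self hr')]
  ext p; fin_cases p <;>
    simp [Hyp, e1, mulVec, dotProduct, Fin.sum_univ_two, Real.cosh_artanh hr',
      Real.sinh_artanh hr'] <;> field_simp
  · linear_combination (-a) * hs
  · ring

lemma mul_sqrt_one_sub_div_sq {a : ℝ} (ha : a ≠ 0) (b : ℝ) :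
    a * √(1 - (b / a) ^ 2) = Real.sign a * √(a ^ 2 - b ^ 2) := by
  have : 1 - (b / a) ^ 2 = (a ^ 2 - b ^ 2) / a ^ 2 := by field_simp
  rw [this, Real.sqrt_div' _ (sq_nonneg a), Real.sqrt_sq_eq_abs]
  rcases ha.lt_or_gt with h | h
  · rw [abs_of_neg h, Real.sign_of_neg h]; field_simp
  · rw [abs_of_pos h, Real.sign_of_pos h]; field_simp

lemma Hyp_neg_artanh_div_mulVec {u : Fin 2 → ℝ} (h : |u 1| < |u 0|) :
    (Hyp (-artanh (u 1 / u 0))).mulVec u = (Real.sign (u 0) * √(u 0 ^ 2 - u 1 ^ 2)) • e1 := by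
  have hu0 : u 0 ≠ 0 := abs_pos.mp ((abs_nonneg _).trans_lt h)
  have hr : |u 1 / u 0| < 1 := by
    rwa [abs_div, div_lt_one (abs_pos.mpr hu0)]
  have hu : u = ![u 0, u 1 / u 0 * u 0] := by
    ext p; fin_cases p <;> simp [div_mul_cancel₀ _ hu0]
  have key := Hyp_neg_artanh_mulVec hr (u 0)
  rwa [← hu, mul_sqrt_one_sub_div_sq hu0] at key

lemma exp_smul_conj_mulVec {m : Type*} [Fintype m] [DecidableEq m] {A : Matrix m m ℝ}
    (hA : IsUnit A) (B : Matrix m m ℝ) (s : ℝ) (x : m → ℝ) :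
    (exp (s • (A⁻¹ * B * A))).mulVec x = A⁻¹.mulVec ((exp (s • B)).mulVec (A.mulVec x)) := by
  rw [← smul_mul_assoc, ← mul_smul_comm, exp_conj' _ _ hA, mulVec_mulVec, mulVec_mulVec]

section Blocks

variable {M : ℕ}

lemma bdiag_mulVec (C : Fin M → Matrix (Fin 2) (Fin 2) ℝ) (v : Idx M → ℝ) :
    (bdiag C).mulVec v = cat fun i => (C i).mulVec (blk v i) := by
  ext ⟨p, i⟩
  simp only [bdiag, cat, blk, mulVec, dotProduct, blockDiagonal_apply,
    Fintype.sum_prod_type_right]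
  rw [Finset.sum_comm]
  simp

lemma exp_smul_bdiag_smul_Kmat (s : ℝ) (lam : Fin M → ℝ) :
    exp (s • bdiag fun i => lam i • Kmat) = bdiag fun i => Hyp (s * lam i) := by
  rw [bdiag, ← blockDiagonal_smul, ← bdiag, exp_bdiag]
  simp_rw [Pi.smul_apply, smul_smul, exp_smul_Kmat]

lemma exp_smul_conj_bdiag_mulVec {A : Matrix (Idx M) (Idx M) ℝ} (hA : IsUnit A)
    (lam : Fin M → ℝ) (s : ℝ) (x : Idx M → ℝ) :
    (exp (s • (A⁻¹ * bdiag (fun i => lam i • Kmat) * A))).mulVec x =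
      A⁻¹.mulVec (cat fun i => (Hyp (s * lam i)).mulVec (blk (A.mulVec x) i)) := by
  rw [exp_smul_conj_mulVec hA, exp_smul_bdiag_smul_Kmat, bdiag_mulVec]

lemma cat_Hyp_neg_t0H_mulVec_eq_invRepH [NeZero M] (A : Matrix (Idx M) (Idx M) ℝ)
    {lam : Fin M → ℝ} (hlam : lam 0 ≠ 0) {x : Idx M → ℝ}
    (hv : |blk (A.mulVec x) 0 1| < |blk (A.mulVec x) 0 0|) :
    (cat fun i => (Hyp (-t0H A lam x * lam i)).mulVec (blk (A.mulVec x) i)) =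
      invRepH A lam x := by
  rw [invRepH]
  congr 1
  funext i
  split_ifs with hi
  · subst hi
    rw [neg_mul, t0H, div_mul_cancel₀ _ hlam]
    exact Hyp_neg_artanh_div_mulVec hv
  · rw [neg_mul]

end Blocks

/-- **Hyperbolic orbit representation.** -/
theorem stmt13 (M : ℕ) [NeZero M] (A : Matrix (Idx M) (Idx M) ℝ) (hA : IsUnit A)
    (lam : Fin M → ℝ) (hlam : lam 0 ≠ 0)
    (L : Matrix (Idx M) (Idx M) ℝ)
    (hL : L = A⁻¹ * bdiag (fun i => lam i • Kmat) * A)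
    (x : Idx M → ℝ) (hv : |blk (A.mulVec x) 0 1| < |blk (A.mulVec x) 0 0|) :
    (exp ((-(t0H A lam x)) • L)).mulVec x = A⁻¹.mulVec (invRepH A lam x) ∧
      A⁻¹.mulVec (invRepH A lam x) ∈
        {y | ∃ t : ℝ, y = (exp (t • L)).mulVec x} := by
  have horbit : (exp ((-t0H A lam x) • L)).mulVec x = A⁻¹.mulVec (invRepH A lam x) := by
    rw [hL, exp_smul_conj_bdiag_mulVec hA, cat_Hyp_neg_t0H_mulVec_eq_invRepH A hlam hv]
  exact ⟨horbit, -t0H A lam x, horbit.symm⟩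
end
end
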